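/- arXiv:2211.14532 — 2 statements merged into one kernel-verified Lean document; each statement's English description precedes it below -/
import Mathlib

section
/- Let Φ : 𝕌 → ℂ be biholomorphic with Φ(0)=1, Φ'(0) > 0, Φ''(0) ∈ ℝ, Re Φ > 0 on 𝕌, and suppose 2Φ'(0) + Φ''(0) ≤ 6Φ'(0)². Let g be holomorphic on 𝕌 with g(0)=0, g'(0)=1, and z g'(z)/g(z) subordinate to Φ. Writing g(z) = z + b₂z² + b₃z³ + ⋯, we have |b₃ − 2b₂²| ≤ (Φ'(0)/2)·(3Φ'(0) − Φ''(0)/(2Φ'(0))). -/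
open Complex Metric Set

open Filter Topology

lemma strictDeriv_of_analyticAt {Φ : ℂ → ℂ} {w : ℂ} (h : AnalyticAt ℂ Φ w) :
    HasStrictDerivAt Φ (deriv Φ w) w := by
  obtain ⟨p, hp⟩ := h
  have h2 := hp.hasStrictDerivAt
  have h3 : ((p 1) fun _ => 1) = deriv Φ w := by
    rw [← hp.deriv]
  rwa [h3] at h2

lemma psi_reg {Φ : ℂ → ℂ} {D : Set ℂ} (hD : IsOpen D) (hΦa : AnalyticOnNhd ℂ Φ D)
    (hΦinj : Set.InjOn Φ D) (Ψ : ℂ → ℂ) (hΨ : ∀ y ∈ Φ '' D, Ψ y ∈ D ∧ Φ (Ψ y) = y)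
    {w : ℂ} (hw : w ∈ D) (hne : deriv Φ w ≠ 0) :
    DifferentiableAt ℂ Ψ (Φ w) ∧ Φ '' D ∈ 𝓝 (Φ w) := by
  have hs : HasStrictDerivAt Φ (deriv Φ w) w := strictDeriv_of_analyticAt (hΦa w hw)
  have hF := hs.hasStrictFDerivAt_equiv hne
  set σ := hF.localInverse Φ _ w with hσdef
  have hσw : σ (Φ w) = w := hF.localInverse_apply_image
  have ev1 : ∀ᶠ y in 𝓝 (Φ w), Φ (σ y) = y := hF.eventually_right_inverse
  have ev2 : ∀ᶠ y in 𝓝 (Φ w), σ y ∈ D := by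
    have hc : ContinuousAt σ (Φ w) := hF.localInverse_continuousAt
    have : D ∈ 𝓝 (σ (Φ w)) := by rw [hσw]; exact hD.mem_nhds hw
    exact hc.eventually_mem this
  have ev3 : ∀ᶠ y in 𝓝 (Φ w), y ∈ Φ '' D := by
    filter_upwards [ev1, ev2] with y h1 h2
    exact ⟨σ y, h2, h1⟩
  have ev4 : Ψ =ᶠ[𝓝 (Φ w)] σ := by
    filter_upwards [ev1, ev2, ev3] with y h1 h2 h3
    exact hΦinj (hΨ y h3).1 h2 ((hΨ y h3).2.trans h1.symm)
  have hσd : DifferentiableAt ℂ σ (Φ w) := hF.to_localInverse.differentiableAt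
  exact ⟨hσd.congr_of_eventuallyEq ev4, eventually_mem_set.mp ev3⟩

lemma deriv_ne_zero_of_injOn {Φ : ℂ → ℂ} {D : Set ℂ} (hD : IsOpen D)
    (hΦ : DifferentiableOn ℂ Φ D) (hΦinj : Set.InjOn Φ D)
    (Ψ : ℂ → ℂ) (hΨ : ∀ y ∈ Φ '' D, Ψ y ∈ D ∧ Φ (Ψ y) = y)
    {w₀ : ℂ} (hw₀ : w₀ ∈ D) : deriv Φ w₀ ≠ 0 := by
  intro h0
  have hΦa : AnalyticOnNhd ℂ Φ D := hΦ.analyticOnNhd hD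
  have hΨu : ∀ w ∈ D, Ψ (Φ w) = w := by
    intro w hw
    have h1 := hΨ (Φ w) ⟨w, hw, rfl⟩
    exact hΦinj h1.1 hw h1.2
  -- Φ is not eventually constant at w₀
  have nonconst : ¬ (∀ᶠ z in 𝓝 w₀, Φ z = Φ w₀) := by
    intro hev
    have h1 : ∀ᶠ z in 𝓝[≠] w₀, Φ z = Φ w₀ ∧ z ∈ D ∧ z ≠ w₀ := by
      rw [eventually_nhdsWithin_iff]
      filter_upwards [hev, hD.eventually_mem hw₀] with z h2 h3 h4
      exact ⟨h2, h3, h4⟩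
    obtain ⟨z, hz1, hz2, hz3⟩ := h1.exists
    exact hz3 (hΦinj hz2 hw₀ hz1)
  -- open mapping at w₀
  have hmap : 𝓝 (Φ w₀) ≤ map Φ (𝓝 w₀) :=
    ((hΦa w₀ hw₀).eventually_constant_or_nhds_le_map_nhds).resolve_left nonconst
  -- deriv Φ nonzero on a punctured neighborhood
  have hder : ∀ᶠ z in 𝓝[≠] w₀, deriv Φ z ≠ 0 := by
    rcases ((hΦa.deriv) w₀ hw₀).eventually_eq_zero_or_eventually_ne_zero with hc | hne
    · exfalso
      apply nonconst
      obtain ⟨ε, hε, hball⟩ := Metric.eventually_nhds_iff_ball.mp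
        (hc.and (hD.eventually_mem hw₀))
      have hconst : ∀ z ∈ ball w₀ ε, Φ z = Φ w₀ := by
        intro z hz
        refine (convex_ball w₀ ε).is_const_of_fderivWithin_eq_zero
          (hΦ.mono fun x hx => (hball x hx).2) ?_ hz (mem_ball_self hε)
        intro x hx
        rw [fderivWithin_of_isOpen isOpen_ball hx]
        have hdx : HasDerivAt Φ 0 x := by
          have := (hΦ.differentiableAt (hD.mem_nhds (hball x hx).2)).hasDerivAt
          rwa [(hball x hx).1] at this
        have := hdx.hasFDerivAt.fderiv
        rw [this]
        ext
        simp [h0]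
      exact Metric.eventually_nhds_iff_ball.mpr ⟨ε, hε, hconst⟩
    · exact hne
  -- choose ε
  obtain ⟨ε, hε, hball⟩ := Metric.eventually_nhds_iff_ball.mp
    ((eventually_nhdsWithin_iff.mp hder).and (hD.eventually_mem hw₀))
  have hballD : ball w₀ ε ⊆ D := fun x hx => (hball x hx).2
  have hballne : ∀ z ∈ ball w₀ ε, z ≠ w₀ → deriv Φ z ≠ 0 := fun z hz hzw =>
    (hball z hz).1 hzw
  set δ := ε / 2 with hδdef
  have hδ : 0 < δ := half_pos hε
  have hVball : ball w₀ δ ⊆ ball w₀ ε := ball_subset_ball (by linarith)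
  have hcball : closedBall w₀ δ ⊆ ball w₀ ε := by
    intro x hx
    exact lt_of_le_of_lt (mem_closedBall.mp hx) (by linarith)
  set y₀ := Φ w₀ with hy₀def
  set V := ball w₀ δ with hVdef
  set s := Φ '' V with hsdef
  have hs_nhds : s ∈ 𝓝 y₀ := hmap (image_mem_map (ball_mem_nhds w₀ hδ))
  have hΨV : ∀ y ∈ s, y ≠ y₀ → Ψ y ∈ V ∧ y ∈ Φ '' D ∧ deriv Φ (Ψ y) ≠ 0 := by
    rintro y ⟨w, hwV, rfl⟩ hne
    have hwD : w ∈ D := hballD (hVball hwV)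
    have hΨy : Ψ (Φ w) = w := hΨu w hwD
    refine ⟨by rw [hΨy]; exact hwV, ⟨w, hwD, rfl⟩, ?_⟩
    rw [hΨy]
    exact hballne w (hVball hwV) (fun hh => hne (by rw [hh]))
  have hdiff : DifferentiableOn ℂ Ψ (s \ {y₀}) := by
    rintro y ⟨hys, hyne⟩
    have hyne' : y ≠ y₀ := hyne
    obtain ⟨h1, h2, h3⟩ := hΨV y hys hyne'
    have h4 := (psi_reg hD hΦa hΦinj Ψ hΨ (hballD (hVball h1)) h3).1
    rw [(hΨ y h2).2] at h4
    exact h4.differentiableWithinAt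
  have bdd : BddAbove (norm ∘ Ψ '' (s \ {y₀})) := by
    refine ⟨‖w₀‖ + δ, ?_⟩
    rintro x ⟨y, ⟨hys, hyne⟩, rfl⟩
    obtain ⟨h1, _, _⟩ := hΨV y hys hyne
    have := mem_ball_iff_norm.mp h1
    simp only [Function.comp_apply]
    have : ‖Ψ y‖ ≤ ‖w₀‖ + ‖Ψ y - w₀‖ := by
      calc ‖Ψ y‖ = ‖w₀ + (Ψ y - w₀)‖ := by ring_nf
        _ ≤ ‖w₀‖ + ‖Ψ y - w₀‖ := norm_add_le _ _
    linarith [mem_ball_iff_norm.mp h1]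
  set F := Function.update Ψ y₀ (limUnder (𝓝[≠] y₀) Ψ) with hFdef
  have hFdiff : DifferentiableOn ℂ F s :=
    Complex.differentiableOn_update_limUnder_of_bddAbove hs_nhds hdiff bdd
  have hFat : DifferentiableAt ℂ F y₀ := hFdiff.differentiableAt hs_nhds
  have hFeq : ∀ y, y ≠ y₀ → F y = Ψ y := fun y hy => Function.update_of_ne hy _ _
  have hFev : ∀ᶠ y in 𝓝[≠] y₀, F y ∈ V := by
    rw [eventually_nhdsWithin_iff]
    filter_upwards [hs_nhds] with y hys hyne
    rw [hFeq y hyne]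
    exact (hΨV y hys hyne).1
  have hF0mem : F y₀ ∈ closedBall w₀ δ := by
    have ht : Tendsto F (𝓝[≠] y₀) (𝓝 (F y₀)) :=
      (hFat.continuousAt.tendsto).mono_left nhdsWithin_le_nhds
    have := mem_closure_of_tendsto ht hFev
    rwa [closure_ball w₀ hδ.ne'] at this
  have hF0D : F y₀ ∈ D := hballD (hcball hF0mem)
  have hΦFcont : ContinuousAt (fun y => Φ (F y)) y₀ :=
    ((hΦ.differentiableAt (hD.mem_nhds hF0D)).continuousAt).comp hFat.continuousAt
  have hright' : ∀ᶠ y in 𝓝[≠] y₀, Φ (F y) = y := by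
    rw [eventually_nhdsWithin_iff]
    filter_upwards [hs_nhds] with y hys hyne
    rw [hFeq y hyne]
    exact (hΨ y (hΨV y hys hyne).2.1).2
  have hpt : Φ (F y₀) = y₀ := by
    have t1 : Tendsto (fun y => Φ (F y)) (𝓝[≠] y₀) (𝓝 (Φ (F y₀))) :=
      hΦFcont.tendsto.mono_left nhdsWithin_le_nhds
    have t2 : Tendsto (fun y => Φ (F y)) (𝓝[≠] y₀) (𝓝 y₀) := by
      refine Tendsto.congr' ?_ (tendsto_id.mono_left nhdsWithin_le_nhds)
      filter_upwards [hright'] with y hy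
      exact hy.symm
    exact tendsto_nhds_unique t1 t2
  have hFw₀ : F y₀ = w₀ := hΦinj hF0D hw₀ hpt
  have hev_full : ∀ᶠ y in 𝓝 y₀, Φ (F y) = y := by
    have h1 := eventually_nhdsWithin_iff.mp hright'
    filter_upwards [h1] with y hy
    by_cases hcase : y = y₀
    · rw [hcase]; exact hpt
    · exact hy hcase
  have hdF : HasDerivAt F (deriv F y₀) y₀ := hFat.hasDerivAt
  have hdΦ : HasDerivAt Φ (deriv Φ w₀) (F y₀) := by
    rw [hFw₀]
    exact (hΦ.differentiableAt (hD.mem_nhds hw₀)).hasDerivAt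
  have hcomp : HasDerivAt (fun y => Φ (F y)) (deriv Φ w₀ * deriv F y₀) y₀ :=
    HasDerivAt.comp y₀ hdΦ hdF
  have heq1 : deriv (fun y => Φ (F y)) y₀ = deriv Φ w₀ * deriv F y₀ := hcomp.deriv
  have heq2 : deriv (fun y => Φ (F y)) y₀ = 1 := by
    have : (fun y => Φ (F y)) =ᶠ[𝓝 y₀] id := by
      filter_upwards [hev_full] with y hy using hy
    rw [this.deriv_eq, deriv_id]
  rw [heq2, h0, zero_mul] at heq1
  exact one_ne_zero (heq1 : (1:ℂ) = 0)

lemma mobius_lt_one {a w : ℂ} (ha : ‖a‖ < 1) (hw : ‖w‖ < 1) :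
    ‖(w - a) / (1 - (starRingEnd ℂ) a * w)‖ < 1 := by
  have hden : ‖1 - (starRingEnd ℂ) a * w‖ ≠ 0 := by
    intro h
    have h1 : (1 : ℂ) - (starRingEnd ℂ) a * w = 0 := by
      simpa using norm_eq_zero.mp h
    have h2 : ‖(starRingEnd ℂ) a * w‖ = 1 := by
      have : (starRingEnd ℂ) a * w = 1 := by linear_combination -h1
      simp [this]
    rw [norm_mul, Complex.norm_conj] at h2
    nlinarith [norm_nonneg a, norm_nonneg w]
  rw [norm_div, div_lt_one (lt_of_le_of_ne (norm_nonneg _) (Ne.symm hden))]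
  have h1 : Complex.normSq a < 1 := by
    rw [Complex.normSq_eq_norm_sq]; nlinarith [norm_nonneg a]
  have h2 : Complex.normSq w < 1 := by
    rw [Complex.normSq_eq_norm_sq]; nlinarith [norm_nonneg w]
  have key : Complex.normSq (w - a) < Complex.normSq (1 - (starRingEnd ℂ) a * w) := by
    simp only [Complex.normSq_apply, Complex.sub_re, Complex.sub_im, Complex.mul_re,
      Complex.mul_im, Complex.one_re, Complex.one_im, Complex.conj_re, Complex.conj_im,
      Complex.normSq_apply] at *
    nlinarith [mul_pos (sub_pos.mpr h1) (sub_pos.mpr h2)]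
  have e1 := Complex.normSq_eq_norm_sq (w - a)
  have e2 := Complex.normSq_eq_norm_sq (1 - (starRingEnd ℂ) a * w)
  nlinarith [norm_nonneg (w - a), norm_nonneg (1 - (starRingEnd ℂ) a * w)]

lemma schwarz_coeff {ω : ℂ → ℂ} (hω : DifferentiableOn ℂ ω (ball (0:ℂ) 1))
    (hmaps : MapsTo ω (ball (0:ℂ) 1) (ball (0:ℂ) 1)) (hω0 : ω 0 = 0) :
    ‖deriv ω 0‖ ≤ 1 ∧
      ‖deriv (dslope ω 0) 0‖ ≤ 1 - ‖deriv ω 0‖ ^ 2 := by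
  have h0D : (0:ℂ) ∈ ball (0:ℂ) 1 := by simp
  set D := ball (0:ℂ) 1 with hDdef
  set φ := dslope ω 0 with hφdef
  have hφd : DifferentiableOn ℂ φ D :=
    (differentiableOn_dslope (isOpen_ball.mem_nhds h0D)).mpr hω
  have hmaps' : MapsTo ω D (closedBall (ω 0) 1) := by
    rw [hω0]; exact hmaps.mono_right ball_subset_closedBall
  have hφle : ∀ z ∈ D, ‖φ z‖ ≤ 1 := by
    intro z hz
    have := Complex.norm_dslope_le_div_of_mapsTo_ball hω hmaps' hz
    simpa using this
  have hφ0 : φ 0 = deriv ω 0 := dslope_same ω 0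
  have hc₁ : ‖deriv ω 0‖ ≤ 1 := by
    have := hφle 0 h0D
    rwa [hφ0] at this
  refine ⟨hc₁, ?_⟩
  by_cases hstrict : ∀ z ∈ D, ‖φ z‖ < 1
  · set a := φ 0 with hadef
    have ha : ‖a‖ < 1 := by
      have := hstrict 0 h0D; exact this
    have hden : ∀ z ∈ D, (1 - (starRingEnd ℂ) a * φ z) ≠ 0 := by
      intro z hz h
      have h1 : (starRingEnd ℂ) a * φ z = 1 := by linear_combination -h
      have h2 : ‖(starRingEnd ℂ) a * φ z‖ = 1 := by rw [h1]; simp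
      rw [norm_mul, Complex.norm_conj] at h2
      have := hstrict z hz
      nlinarith [norm_nonneg a, norm_nonneg (φ z)]
    set F := fun z => (φ z - a) / (1 - (starRingEnd ℂ) a * φ z) with hFdef
    have hFd : DifferentiableOn ℂ F D := by
      apply DifferentiableOn.div (hφd.sub_const a)
      · exact (differentiableOn_const 1).sub ((differentiableOn_const _).mul hφd)
      · exact hden
    have hF0 : F 0 = 0 := by simp [hFdef, ← hadef]
    have hFmaps : MapsTo F D (closedBall (F 0) 1) := by
      rw [hF0]
      intro z hz
      rw [mem_closedBall_zero_iff]
      exact (mobius_lt_one ha (hstrict z hz)).le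
    have hkey := Complex.norm_dslope_le_div_of_mapsTo_ball hFd hFmaps h0D
    rw [dslope_same] at hkey
    -- compute deriv F 0
    have hφ0d : DifferentiableAt ℂ φ 0 := hφd.differentiableAt (isOpen_ball.mem_nhds h0D)
    set c₂ := deriv φ 0 with hc₂def
    have hu : HasDerivAt (fun z => φ z - a) c₂ 0 := hφ0d.hasDerivAt.sub_const a
    have hv : HasDerivAt (fun z => 1 - (starRingEnd ℂ) a * φ z)
        (-((starRingEnd ℂ) a * c₂)) 0 := by
      exact (hφ0d.hasDerivAt.const_mul ((starRingEnd ℂ) a)).const_sub 1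
    have hdiv := hu.fun_div hv (hden 0 h0D)
    have hval : deriv F 0 = c₂ / (1 - (starRingEnd ℂ) a * a) := by
      rw [hdiv.deriv]
      rw [← hadef]
      rw [div_eq_div_iff (pow_ne_zero 2 (hden 0 h0D : 1 - (starRingEnd ℂ) a * a ≠ 0))
        (hden 0 h0D : 1 - (starRingEnd ℂ) a * a ≠ 0)]
      ring
    rw [hval] at hkey
    have hv0 : (1 - (starRingEnd ℂ) a * a) = ((1 - ‖a‖ ^ 2 : ℝ) : ℂ) := by
      have : (starRingEnd ℂ) a * a = ((Complex.normSq a : ℝ) : ℂ) := by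
        rw [mul_comm, Complex.mul_conj]
      rw [this, Complex.normSq_eq_norm_sq]
      push_cast
      ring
    rw [norm_div, hv0, Complex.norm_real, Real.norm_eq_abs,
      _root_.abs_of_nonneg (by nlinarith [norm_nonneg a] : (0:ℝ) ≤ 1 - ‖a‖ ^ 2)] at hkey
    have hpos : (0:ℝ) < 1 - ‖a‖ ^ 2 := by nlinarith [norm_nonneg a, ha]
    rw [← hφ0]
    calc ‖c₂‖
        = ‖c₂‖ / (1 - ‖a‖ ^ 2) * (1 - ‖a‖ ^ 2) := by
          field_simp
      _ ≤ 1 * (1 - ‖a‖ ^ 2) := by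
          refine mul_le_mul_of_nonneg_right ?_ hpos.le
          simpa using hkey
      _ = 1 - ‖a‖ ^ 2 := one_mul _
  · push_neg at hstrict
    obtain ⟨z₀, hz₀, hge⟩ := hstrict
    have heq1 : ‖φ z₀‖ = 1 := le_antisymm (hφle z₀ hz₀) hge
    have hmax : IsMaxOn (norm ∘ φ) D z₀ := by
      intro x hx
      simp only [Function.comp_apply]
      rw [heq1]
      exact hφle x hx
    have hconst := Complex.eqOn_of_isPreconnected_of_isMaxOn_norm
      (convex_ball (0:ℂ) 1).isPreconnected isOpen_ball hφd hz₀ hmax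
    have hev : φ =ᶠ[𝓝 0] (fun _ => φ z₀) := by
      filter_upwards [isOpen_ball.mem_nhds h0D] with x hx
      exact hconst hx
    have hd0 : deriv φ 0 = 0 := by
      rw [hev.deriv_eq]
      exact deriv_const 0 (φ z₀)
    rw [hd0]
    have : ‖deriv ω 0‖ = 1 := by
      rw [← hφ0]
      have := hconst h0D
      rw [show φ 0 = φ z₀ from this, heq1]
    rw [this]
    simp

lemma deriv_congr_on_open {f g : ℂ → ℂ} {s : Set ℂ} (hs : IsOpen s) {z : ℂ} (hz : z ∈ s)
    (h : ∀ w ∈ s, f w = g w) : deriv f z = deriv g z := by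
  apply Filter.EventuallyEq.deriv_eq
  filter_upwards [hs.mem_nhds hz] with w hw
  exact h w hw

-- derivative-computation core, assuming the subordination function ω is already built

theorem fs_core (Φ g ω : ℂ → ℂ)
    (hΦ : DifferentiableOn ℂ Φ (ball (0:ℂ) 1))
    (hg : DifferentiableOn ℂ g (ball (0:ℂ) 1))
    (h0 : g 0 = 0) (h1 : deriv g 0 = 1)
    (hωd : DifferentiableOn ℂ ω (ball (0:ℂ) 1))
    (hωmem : ∀ z ∈ ball (0:ℂ) 1, ω z ∈ ball (0:ℂ) 1)
    (hω0 : ω 0 = 0)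
    (hgne : ∀ z ∈ ball (0:ℂ) 1, z ≠ 0 → g z ≠ 0)
    (hΦω : ∀ z ∈ ball (0:ℂ) 1, Φ (ω z) = deriv g z / (dslope g 0 z)) :
    iteratedDeriv 3 g 0 / 6 - 2 * (iteratedDeriv 2 g 0 / 2) ^ 2 =
      ((iteratedDeriv 2 Φ 0 - 6 * (deriv Φ 0) ^ 2) * (deriv ω 0) ^ 2
        + 2 * deriv Φ 0 * deriv (dslope ω 0) 0) / 4 := by
  classical
  set D := ball (0:ℂ) 1 with hDdef
  have hDo : IsOpen D := isOpen_ball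
  have hD0 : (0:ℂ) ∈ D := by simp [hDdef]
  have hga : AnalyticOnNhd ℂ g D := hg.analyticOnNhd hDo
  have hΦa : AnalyticOnNhd ℂ Φ D := hΦ.analyticOnNhd hDo
  set h : ℂ → ℂ := dslope g 0 with hhdef
  have hhd : DifferentiableOn ℂ h D := (differentiableOn_dslope (hDo.mem_nhds hD0)).mpr hg
  have hha : AnalyticOnNhd ℂ h D := hhd.analyticOnNhd hDo
  have hh0 : h 0 = 1 := by rw [hhdef, dslope_same, h1]
  have gid : ∀ z, g z = z * h z := by
    intro z
    by_cases hz : z = 0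
    · simp [hz, h0]
    · rw [hhdef, dslope_of_ne g hz, slope_def_field, h0]
      field_simp
      ring
  have hhne : ∀ z ∈ D, h z ≠ 0 := by
    intro z hz
    by_cases hz0 : z = 0
    · rw [hz0, hh0]; exact one_ne_zero
    · intro hcontra
      exact hgne z hz hz0 (by rw [gid z, hcontra, mul_zero])
  set q : ℂ → ℂ := fun z => deriv g z / h z with hqdef
  have hq0 : q 0 = 1 := by rw [hqdef]; simp [h1, hh0]
  have hqa : AnalyticOnNhd ℂ q D := fun z hz => ((hga.deriv z hz).div (hha z hz) (hhne z hz))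
  have hωa : AnalyticOnNhd ℂ ω D := hωd.analyticOnNhd hDo
  set φ : ℂ → ℂ := dslope ω 0 with hφdef
  have hφd : DifferentiableOn ℂ φ D := (differentiableOn_dslope (hDo.mem_nhds hD0)).mpr hωd
  have hφa : AnalyticOnNhd ℂ φ D := hφd.analyticOnNhd hDo
  have ωid : ∀ z, ω z = z * φ z := by
    intro z
    by_cases hz : z = 0
    · simp [hz, hω0]
    · rw [hφdef, dslope_of_ne ω hz, slope_def_field, hω0]
      field_simp
      ring
  -- first derivatives of g
  have hdg : ∀ z ∈ D, deriv g z = h z + z * deriv h z := by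
    intro z hz
    have e : deriv g z = deriv (fun w => w * h w) z :=
      deriv_congr_on_open hDo hz (fun w _ => gid w)
    rw [e, deriv_fun_mul differentiableAt_fun_id ((hha z hz).differentiableAt)]
    simp
  have hdg2 : ∀ z ∈ D, deriv (deriv g) z = 2 * deriv h z + z * deriv (deriv h) z := by
    intro z hz
    have e : deriv (deriv g) z = deriv (fun w => h w + w * deriv h w) z :=
      deriv_congr_on_open hDo hz hdg
    rw [e, deriv_fun_add ((hha z hz).differentiableAt)
      (differentiableAt_fun_id.fun_mul ((hha.deriv z hz).differentiableAt)),
      deriv_fun_mul differentiableAt_fun_id ((hha.deriv z hz).differentiableAt)]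
    simp
    ring
  have hdg3 : deriv (deriv (deriv g)) 0 = 3 * deriv (deriv h) 0 := by
    have e : deriv (deriv (deriv g)) 0 = deriv (fun z => 2 * deriv h z + z * deriv (deriv h) z) 0 :=
      deriv_congr_on_open hDo hD0 hdg2
    rw [e, deriv_fun_add (((hha.deriv 0 hD0).differentiableAt).const_mul 2)
      (differentiableAt_fun_id.fun_mul ((hha.deriv.deriv 0 hD0).differentiableAt)),
      deriv_const_mul 2 ((hha.deriv 0 hD0).differentiableAt),
      deriv_fun_mul differentiableAt_fun_id ((hha.deriv.deriv 0 hD0).differentiableAt)]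
    simp
    ring
  have e1 : deriv (deriv g) 0 = 2 * deriv h 0 := by
    rw [hdg2 0 hD0]; ring
  -- derivatives via q
  have hdgq : ∀ z ∈ D, deriv g z = q z * h z := by
    intro z hz
    rw [hqdef]
    field_simp [hhne z hz]
  have hdg2q : ∀ z ∈ D, deriv (deriv g) z = deriv q z * h z + q z * deriv h z := by
    intro z hz
    have e : deriv (deriv g) z = deriv (fun w => q w * h w) z :=
      deriv_congr_on_open hDo hz hdgq
    rw [e, deriv_fun_mul ((hqa z hz).differentiableAt) ((hha z hz).differentiableAt)]
  have e3 : deriv (deriv g) 0 = deriv q 0 + deriv h 0 := by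
    rw [hdg2q 0 hD0, hh0, hq0]; ring
  have e4 : deriv (deriv (deriv g)) 0 =
      deriv (deriv q) 0 + 2 * deriv q 0 * deriv h 0 + deriv (deriv h) 0 := by
    have e : deriv (deriv (deriv g)) 0 =
        deriv (fun w => deriv q w * h w + q w * deriv h w) 0 :=
      deriv_congr_on_open hDo hD0 hdg2q
    rw [e, deriv_fun_add
      (((hqa.deriv 0 hD0).differentiableAt).fun_mul ((hha 0 hD0).differentiableAt))
      (((hqa 0 hD0).differentiableAt).fun_mul ((hha.deriv 0 hD0).differentiableAt)),
      deriv_fun_mul ((hqa.deriv 0 hD0).differentiableAt) ((hha 0 hD0).differentiableAt),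
      deriv_fun_mul ((hqa 0 hD0).differentiableAt) ((hha.deriv 0 hD0).differentiableAt),
      hh0, hq0]
    ring
  -- derivatives via Φ ∘ ω
  have hqΦω : ∀ z ∈ D, q z = Φ (ω z) := by
    intro z hz
    rw [hΦω z hz, hqdef]
  have hd1q : ∀ z ∈ D, deriv q z = deriv Φ (ω z) * deriv ω z := by
    intro z hz
    have e : deriv q z = deriv (fun w => Φ (ω w)) z :=
      deriv_congr_on_open hDo hz hqΦω
    rw [e]
    have hΦd : HasDerivAt Φ (deriv Φ (ω z)) (ω z) :=
      ((hΦa (ω z) (hωmem z hz)).differentiableAt).hasDerivAt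
    have hωd' : HasDerivAt ω (deriv ω z) z := ((hωa z hz).differentiableAt).hasDerivAt
    exact (hΦd.comp z hωd').deriv
  have e6 : deriv (deriv q) 0 =
      deriv (deriv Φ) 0 * (deriv ω 0) ^ 2 + deriv Φ 0 * deriv (deriv ω) 0 := by
    have e : deriv (deriv q) 0 = deriv (fun w => deriv Φ (ω w) * deriv ω w) 0 :=
      deriv_congr_on_open hDo hD0 hd1q
    rw [e, deriv_fun_mul ?h1 ((hωa.deriv 0 hD0).differentiableAt)]
    case h1 =>
      have hΦd : DifferentiableAt ℂ (deriv Φ) (ω 0) := by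
        rw [hω0]; exact (hΦa.deriv 0 hD0).differentiableAt
      exact hΦd.comp 0 (hωa 0 hD0).differentiableAt
    have hc : deriv (fun w => deriv Φ (ω w)) 0 = deriv (deriv Φ) (ω 0) * deriv ω 0 := by
      have hΦd : HasDerivAt (deriv Φ) (deriv (deriv Φ) (ω 0)) (ω 0) := by
        have : DifferentiableAt ℂ (deriv Φ) (ω 0) := by
          rw [hω0]; exact (hΦa.deriv 0 hD0).differentiableAt
        exact this.hasDerivAt
      have hωd' : HasDerivAt ω (deriv ω 0) 0 := ((hωa 0 hD0).differentiableAt).hasDerivAt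
      exact (hΦd.comp 0 hωd').deriv
    rw [hc, hω0]
    ring
  have e5 : deriv q 0 = deriv Φ 0 * deriv ω 0 := by
    rw [hd1q 0 hD0, hω0]
  -- dslope relation for ω
  have hdω : ∀ z ∈ D, deriv ω z = φ z + z * deriv φ z := by
    intro z hz
    have e : deriv ω z = deriv (fun w => w * φ w) z :=
      deriv_congr_on_open hDo hz (fun w _ => ωid w)
    rw [e, deriv_fun_mul differentiableAt_fun_id ((hφa z hz).differentiableAt)]
    simp
  have e7 : deriv (deriv ω) 0 = 2 * deriv φ 0 := by
    have e : deriv (deriv ω) 0 = deriv (fun w => φ w + w * deriv φ w) 0 :=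
      deriv_congr_on_open hDo hD0 hdω
    rw [e, deriv_fun_add ((hφa 0 hD0).differentiableAt)
      (differentiableAt_fun_id.fun_mul ((hφa.deriv 0 hD0).differentiableAt)),
      deriv_fun_mul differentiableAt_fun_id ((hφa.deriv 0 hD0).differentiableAt)]
    simp
    ring
  -- iterated derivatives
  have i2 : iteratedDeriv 2 g 0 = deriv (deriv g) 0 := by
    rw [show (2:ℕ) = 1 + 1 from rfl, iteratedDeriv_succ, iteratedDeriv_one]
  have i3 : iteratedDeriv 3 g 0 = deriv (deriv (deriv g)) 0 := by
    rw [show (3:ℕ) = 2 + 1 from rfl, iteratedDeriv_succ]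
    congr 1
    funext x
    rw [show (2:ℕ) = 1 + 1 from rfl, iteratedDeriv_succ, iteratedDeriv_one]
  have iΦ2 : iteratedDeriv 2 Φ 0 = deriv (deriv Φ) 0 := by
    rw [show (2:ℕ) = 1 + 1 from rfl, iteratedDeriv_succ, iteratedDeriv_one]
  -- algebra
  set A' := deriv Φ 0
  set B' := deriv (deriv Φ) 0
  set c₁ := deriv ω 0
  set c₂ := deriv φ 0
  have vdq : deriv q 0 = deriv h 0 := by
    rw [i2] at *
    linear_combination e1 - e3
  have vdh : deriv h 0 = A' * c₁ := by linear_combination e5 - vdq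
  have v3 : deriv (deriv (deriv g)) 0 =
      (3/2) * (B' * c₁^2 + 2 * A' * c₂) + 3 * (A' * c₁)^2 := by
    have e6' : deriv (deriv q) 0 = B' * c₁^2 + 2 * A' * c₂ := by
      rw [e6, e7]; ring
    linear_combination (3/2 : ℂ) * e4 - (1/2 : ℂ) * hdg3 + (3/2 : ℂ) * e6'
      + 3 * (deriv h 0) * e5 + 3 * (A' * c₁) * vdh
  have v2 : iteratedDeriv 2 g 0 = 2 * (A' * c₁) := by
    rw [i2]
    linear_combination e1 + 2 * vdh
  rw [i3, v3, v2, iΦ2]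
  ring

theorem fekete_szego_lambda_two (Φ g : ℂ → ℂ)
    (hΦ : DifferentiableOn ℂ Φ (ball (0:ℂ) 1))
    (hΦinj : Set.InjOn Φ (ball (0:ℂ) 1))
    (hΦ0 : Φ 0 = 1)
    (hΦ1re : 0 < (deriv Φ 0).re) (hΦ1im : (deriv Φ 0).im = 0)
    (hΦ2im : (iteratedDeriv 2 Φ 0).im = 0)
    (hΦre : ∀ z ∈ ball (0:ℂ) 1, 0 < (Φ z).re)
    (hcond : 2 * (deriv Φ 0).re + (iteratedDeriv 2 Φ 0).re ≤ 6 * (deriv Φ 0).re ^ 2)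
    (hg : DifferentiableOn ℂ g (ball (0:ℂ) 1))
    (h0 : g 0 = 0) (h1 : deriv g 0 = 1)
    (hsub : ∀ z ∈ ball (0:ℂ) 1, z ≠ 0 → z * deriv g z / g z ∈ Φ '' (ball (0:ℂ) 1)) :
    ‖iteratedDeriv 3 g 0 / 6 - 2 * (iteratedDeriv 2 g 0 / 2) ^ 2‖
      ≤ (deriv Φ 0).re / 2 *
        (3 * (deriv Φ 0).re - (iteratedDeriv 2 Φ 0).re / (2 * (deriv Φ 0).re)) := by
  classical
  set D := ball (0:ℂ) 1 with hDdef
  have hDo : IsOpen D := isOpen_ball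
  have hD0 : (0:ℂ) ∈ D := by simp [hDdef]
  have hga : AnalyticOnNhd ℂ g D := hg.analyticOnNhd hDo
  have hΦa : AnalyticOnNhd ℂ Φ D := hΦ.analyticOnNhd hDo
  -- g does not vanish on the punctured disk
  have hgne : ∀ z ∈ D, z ≠ 0 → g z ≠ 0 := by
    intro z hz hz0 hgz0
    have hmem := hsub z hz hz0
    rw [hgz0, div_zero] at hmem
    obtain ⟨w, hw, hΦw⟩ := hmem
    have := hΦre w hw
    rw [hΦw] at this
    simp at this
  -- the auxiliary function h = g z / z
  set h : ℂ → ℂ := dslope g 0 with hhdef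
  have hhd : DifferentiableOn ℂ h D := (differentiableOn_dslope (hDo.mem_nhds hD0)).mpr hg
  have hha : AnalyticOnNhd ℂ h D := hhd.analyticOnNhd hDo
  have hh0 : h 0 = 1 := by rw [hhdef, dslope_same, h1]
  have gid : ∀ z, g z = z * h z := by
    intro z
    by_cases hz : z = 0
    · simp [hz, h0]
    · rw [hhdef, dslope_of_ne g hz, slope_def_field, h0]
      field_simp
      ring
  have hhne : ∀ z ∈ D, h z ≠ 0 := by
    intro z hz
    by_cases hz0 : z = 0
    · rw [hz0, hh0]; exact one_ne_zero
    · intro hcontra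
      exact hgne z hz hz0 (by rw [gid z, hcontra, mul_zero])
  -- q = z g'(z)/g(z), extended analytically at 0
  set q : ℂ → ℂ := fun z => deriv g z / h z with hqdef
  have hqmem : ∀ z ∈ D, q z ∈ Φ '' D := by
    intro z hz
    by_cases hz0 : z = 0
    · rw [hqdef, hz0]
      simp only [h1, hh0, div_one]
      exact ⟨0, hD0, hΦ0⟩
    · have hmem := hsub z hz hz0
      have : z * deriv g z / g z = q z := by
        rw [hqdef, gid z, mul_div_mul_left (deriv g z) (h z) hz0]
      rwa [this] at hmem
  have hqd : DifferentiableOn ℂ q D := fun z hz =>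
    (((hga.deriv z hz).div (hha z hz) (hhne z hz)).differentiableAt).differentiableWithinAt
  -- the inverse function Ψ
  set Ψ : ℂ → ℂ := fun y => if hy : y ∈ Φ '' D then hy.choose else 0 with hΨdef
  have hΨ : ∀ y ∈ Φ '' D, Ψ y ∈ D ∧ Φ (Ψ y) = y := by
    intro y hy
    rw [hΨdef]
    simp only [dif_pos hy]
    exact ⟨hy.choose_spec.1, hy.choose_spec.2⟩
  have hΨu : ∀ w ∈ D, Ψ (Φ w) = w := by
    intro w hw
    have h1 := hΨ (Φ w) ⟨w, hw, rfl⟩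
    exact hΦinj h1.1 hw h1.2
  have hcrit : ∀ w ∈ D, deriv Φ w ≠ 0 := fun w hw =>
    deriv_ne_zero_of_injOn hDo hΦ hΦinj Ψ hΨ hw
  have hΨat : ∀ y ∈ Φ '' D, DifferentiableAt ℂ Ψ y := by
    rintro y ⟨w, hw, rfl⟩
    exact (psi_reg hDo hΦa hΦinj Ψ hΨ hw (hcrit w hw)).1
  -- the Schwarz function ω
  set ω : ℂ → ℂ := fun z => Ψ (q z) with hωdef
  have hωmem : ∀ z ∈ D, ω z ∈ D := fun z hz => (hΨ (q z) (hqmem z hz)).1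
  have hΦω : ∀ z ∈ D, Φ (ω z) = q z := fun z hz => (hΨ (q z) (hqmem z hz)).2
  have hω0 : ω 0 = 0 := by
    have e : q 0 = Φ 0 := by rw [hqdef]; simp [h1, hh0, hΦ0]
    rw [hωdef]
    simp only [e]
    exact hΨu 0 hD0
  have hωd : DifferentiableOn ℂ ω D := fun z hz =>
    (hΨat (q z) (hqmem z hz)).comp_differentiableWithinAt z (hqd z hz)
  -- Schwarz--Pick coefficient bounds
  obtain ⟨s1, s2⟩ := schwarz_coeff hωd (fun z hz => hωmem z hz) hω0
  -- coefficient identity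
  have key := fs_core Φ g ω hΦ hg h0 h1 hωd hωmem hω0 hgne hΦω
  -- pass to real constants
  set A := (deriv Φ 0).re with hAdef
  set B := (iteratedDeriv 2 Φ 0).re with hBdef
  have hA' : deriv Φ 0 = (A : ℂ) := by
    apply Complex.ext
    · simp [hAdef]
    · simp [hΦ1im]
  have hB' : iteratedDeriv 2 Φ 0 = (B : ℂ) := by
    apply Complex.ext
    · simp [hBdef]
    · simp [hΦ2im]
  set c₁ := deriv ω 0 with hc₁def
  set c₂ := deriv (dslope ω 0) 0 with hc₂def
  have hBle : B ≤ 6 * A ^ 2 := by nlinarith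
  have habs1 : ‖(B : ℂ) - 6 * (A : ℂ) ^ 2‖ = 6 * A ^ 2 - B := by
    have : ((B : ℂ) - 6 * (A : ℂ) ^ 2) = (((B - 6 * A ^ 2 : ℝ)) : ℂ) := by push_cast; ring
    rw [this, Complex.norm_real, Real.norm_eq_abs, abs_of_nonpos (by linarith)]
    ring
  have habs2 : ‖2 * (A : ℂ)‖ = 2 * A := by
    rw [show (2 * (A:ℂ)) = (((2 * A : ℝ)) : ℂ) by push_cast; ring, Complex.norm_real, Real.norm_eq_abs,
      abs_of_pos (by linarith)]
  have hc₁abs := norm_nonneg c₁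
  have hc₂abs := norm_nonneg c₂
  have step1 : ‖iteratedDeriv 3 g 0 / 6 - 2 * (iteratedDeriv 2 g 0 / 2) ^ 2‖
      ≤ ((6 * A ^ 2 - B) * ‖c₁‖ ^ 2 + 2 * A * ‖c₂‖) / 4 := by
    rw [key, hA', hB']
    rw [norm_div]
    have h4 : ‖(4:ℂ)‖ = 4 := by
      rw [show (4:ℂ) = ((4:ℝ):ℂ) by norm_num, Complex.norm_real, Real.norm_eq_abs]; norm_num
    rw [h4]
    apply div_le_div_of_nonneg_right ?_ (by norm_num)
    · calc ‖((B:ℂ) - 6 * (A:ℂ) ^ 2) * c₁ ^ 2 + 2 * (A:ℂ) * c₂‖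
          ≤ ‖((B:ℂ) - 6 * (A:ℂ) ^ 2) * c₁ ^ 2‖ + ‖2 * (A:ℂ) * c₂‖ :=
            norm_add_le _ _
        _ = (6 * A ^ 2 - B) * ‖c₁‖ ^ 2 + 2 * A * ‖c₂‖ := by
            rw [norm_mul, norm_mul, habs1, habs2, norm_pow]
  have step2 : ((6 * A ^ 2 - B) * ‖c₁‖ ^ 2 + 2 * A * ‖c₂‖) / 4
      ≤ (6 * A ^ 2 - B) / 4 := by
    have h1 : ‖c₂‖ ≤ 1 - ‖c₁‖ ^ 2 := s2
    nlinarith [sq_nonneg (‖c₁‖), mul_le_one₀ s1 hc₁abs s1]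
  have hrhs : A / 2 * (3 * A - B / (2 * A)) = (6 * A ^ 2 - B) / 4 := by
    field_simp
    ring
  rw [hrhs]
  exact le_trans step1 step2
end

section
/- Let Φ : 𝕌 → ℂ be biholomorphic with Φ(0)=1, Φ'(0) > 0, Φ''(0) ∈ ℝ, Re Φ > 0 on 𝕌, and suppose |Φ''(0) + 2Φ'(0)²| ≥ 2Φ'(0). Let g be holomorphic on 𝕌 with g(0)=0, g'(0)=1, and z g'(z)/g(z) subordinate to Φ. Writing g(z) = z + b₂z² + b₃z³ + ⋯, we have |b₃| ≤ (Φ'(0)/2)·|Φ''(0)/(2Φ'(0)) + Φ'(0)|. -/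
open Complex Metric Set Filter
open scoped Topology

lemma deriv_ne_zero_of_injOn_s17 {f : ℂ → ℂ} {s : Set ℂ} (hs : IsOpen s)
    (hf : DifferentiableOn ℂ f s) (hinj : Set.InjOn f s) {a : ℂ} (ha : a ∈ s) :
    deriv f a ≠ 0 := by
  intro hder
  have hfa : AnalyticAt ℂ f a := (hf.analyticOnNhd hs) a ha
  set F : ℂ → ℂ := fun z => f z - f a with hFdef
  have hFa : AnalyticAt ℂ F a := hfa.sub analyticAt_const
  have hF0 : F a = 0 := sub_self _
  -- F is not eventually zero near a
  have hne : ¬ (∀ᶠ z in 𝓝 a, F z = 0) := by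
    intro h
    have h' : ∀ᶠ z in 𝓝[≠] a, (F z = 0 ∧ z ∈ s) ∧ z ≠ a :=
      (((h.filter_mono nhdsWithin_le_nhds).and
        ((hs.eventually_mem ha).filter_mono nhdsWithin_le_nhds))).and
        (eventually_mem_nhdsWithin)
    obtain ⟨b, ⟨hb0, hbs⟩, hba⟩ := h'.exists
    exact hba (hinj hbs ha (by simpa [hFdef, sub_eq_zero] using hb0))
  -- finite order n with factorization
  have horder : analyticOrderAt F a ≠ ⊤ := fun h => hne (analyticOrderAt_eq_top.mp h)
  obtain ⟨n, hn⟩ := WithTop.ne_top_iff_exists.mp horder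
  obtain ⟨g, hg, hg0, hfg⟩ := (hFa.analyticOrderAt_eq_natCast (n := n)).mp hn.symm
  -- n ≥ 2
  have hn0 : n ≠ 0 := by
    rintro rfl
    apply hg0
    have := hfg.self_of_nhds
    simpa [hF0] using this.symm
  have hn1 : n ≠ 1 := by
    rintro rfl
    apply hg0
    have hd1 : deriv F a = deriv f a := by
      simp only [hFdef]
      exact deriv_sub_const _
    have h2 : deriv F a = g a := by
      rw [Filter.EventuallyEq.deriv_eq (hfg : F =ᶠ[𝓝 a] _)]
      have : HasDerivAt (fun z => (z - a) ^ 1 • g z) (g a) a := by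
        have h' := (((hasDerivAt_id a).sub_const a).mul hg.differentiableAt.hasDerivAt)
        simpa [Pi.mul_def] using h'
      exact this.deriv
    rw [← h2, hd1, hder]
  have hn2 : 2 ≤ n := by omega
  -- nth root of g near a
  have hga : g a ≠ 0 := hg0
  set c : ℂ := Complex.exp (Complex.log (g a) / n) with hc
  set r : ℂ → ℂ := fun z => Complex.exp (Complex.log (g z / g a) / n) * c with hr
  -- a good neighborhood
  have hEv : ∀ᶠ z in 𝓝 a, (F z = (z - a) ^ n • g z) ∧ AnalyticAt ℂ g z ∧ g z ≠ 0 ∧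
      g z / g a ∈ slitPlane ∧ z ∈ s := by
    have e1 := hfg
    have e2 : ∀ᶠ z in 𝓝 a, AnalyticAt ℂ g z := hg.eventually_analyticAt
    have e3 : ∀ᶠ z in 𝓝 a, g z ≠ 0 := hg.continuousAt.eventually_ne hga
    have e4 : ∀ᶠ z in 𝓝 a, g z / g a ∈ slitPlane := by
      have hcont : ContinuousAt (fun z => g z / g a) a := hg.continuousAt.div_const _
      have h1 : g a / g a ∈ slitPlane := by
        rw [div_self hga]; exact one_mem_slitPlane
      exact hcont.eventually_mem (isOpen_slitPlane.mem_nhds h1)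
    have e5 : ∀ᶠ z in 𝓝 a, z ∈ s := hs.eventually_mem ha
    filter_upwards [e1, e2, e3, e4, e5] with z h1 h2 h3 h4 h5
    exact ⟨h1, h2, h3, h4, h5⟩
  obtain ⟨t, htp, hto, hta⟩ := _root_.eventually_nhds_iff.mp hEv
  -- r is an nth root of g on t
  have hncast : (n : ℂ) ≠ 0 := Nat.cast_ne_zero.mpr hn0
  have hrn : ∀ z ∈ t, r z ^ n = g z := by
    intro z hz
    obtain ⟨-, -, hgz, hsp, -⟩ := htp z hz
    have h1 : Complex.exp (Complex.log (g z / g a) / n) ^ n = g z / g a := by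
      rw [← Complex.exp_nat_mul, mul_div_cancel₀ _ hncast, Complex.exp_log]
      exact div_ne_zero hgz hga
    have h2 : c ^ n = g a := by
      rw [hc, ← Complex.exp_nat_mul, mul_div_cancel₀ _ hncast, Complex.exp_log hga]
    rw [hr]
    simp only [mul_pow, h1, h2, div_mul_cancel₀ _ hga]
  -- ψ
  set ψ : ℂ → ℂ := fun z => (z - a) * r z with hψ
  have hrdiff : ∀ z ∈ t, DifferentiableAt ℂ r z := by
    intro z hz
    obtain ⟨-, hgan, hgz, hsp, -⟩ := htp z hz
    apply DifferentiableAt.mul_const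
    apply DifferentiableAt.cexp
    apply DifferentiableAt.div_const
    exact (Complex.differentiableAt_log hsp).comp z (hgan.differentiableAt.div_const _)
  have hψdiff : DifferentiableOn ℂ ψ t := fun z hz =>
    (((differentiableAt_id.sub_const a).mul (hrdiff z hz)).differentiableWithinAt)
  have hψa : AnalyticAt ℂ ψ a := (hψdiff.analyticOnNhd hto) a hta
  have hra : r a = c := by
    rw [hr]
    simp [div_self hga, Complex.log_one]
  have hrane : r a ≠ 0 := by rw [hra]; exact Complex.exp_ne_zero _
  have hderψ : HasDerivAt ψ (r a) a := by
    have h' := ((hasDerivAt_id a).sub_const a).mul (hrdiff a hta).hasDerivAt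
    simpa [Pi.mul_def, hψ] using h'
  have hstrict : HasStrictDerivAt ψ (r a) a := by
    have := (hψa.contDiffAt (n := 1)).hasStrictDerivAt one_ne_zero
    rwa [hderψ.deriv] at this
  have hψa0 : ψ a = 0 := by simp [hψ]
  have hmap : map ψ (𝓝 a) = 𝓝 (0 : ℂ) := by
    have := hstrict.map_nhds_eq hrane
    rwa [hψa0] at this
  -- extract two preimages
  have himg : ψ '' t ∈ 𝓝 (0 : ℂ) := by
    rw [← hmap]
    exact image_mem_map (hto.mem_nhds hta)
  obtain ⟨ε, hε, hball⟩ := Metric.mem_nhds_iff.mp himg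
  set v : ℂ := ((ε / 2 : ℝ) : ℂ) with hv
  have hvne : v ≠ 0 := by
    simp only [hv, ne_eq, Complex.ofReal_eq_zero]
    positivity
  have hvmem : v ∈ ball (0 : ℂ) ε := by
    simp only [hv, mem_ball, dist_zero_right, Complex.norm_real, Real.norm_eq_abs]
    rw [abs_of_pos (by positivity)]
    linarith
  set ζ : ℂ := Complex.exp (2 * Real.pi * I / n) with hζ
  have hζabs : ‖ζ‖ = 1 := by
    rw [hζ, Complex.norm_exp]
    norm_num [Complex.div_re, Complex.normSq]
  have hζn : ζ ^ n = 1 := by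
    rw [hζ, ← Complex.exp_nat_mul, mul_div_cancel₀ _ hncast]
    exact_mod_cast Complex.exp_two_pi_mul_I
  have hζ1 : ζ ≠ 1 := by
    rw [hζ]
    intro h
    obtain ⟨k, hk⟩ := Complex.exp_eq_one_iff.mp h
    have h2πI : (2 * Real.pi * I : ℂ) ≠ 0 := by
      simp [Real.pi_ne_zero, Complex.I_ne_zero]
    field_simp at hk
    have h1 : (2 * (Real.pi:ℂ) * I) * 1 = (2 * (Real.pi:ℂ) * I) * ((k:ℂ) * n) := by
      linear_combination (2 * (Real.pi:ℂ) * I) * hk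
    have h2 : (1 : ℂ) = (k:ℂ) * n := mul_left_cancel₀ h2πI h1
    have hkr : (k:ℝ) * n = 1 := by
      have := congrArg Complex.re h2.symm
      push_cast at this ⊢
      simpa using this
    have hn2' : (2:ℝ) ≤ (n:ℝ) := by exact_mod_cast hn2
    have hkpos : 0 < (k:ℝ) := by nlinarith
    have hk1 : (1:ℝ) ≤ (k:ℝ) := by
      have : (0:ℤ) < k := by exact_mod_cast hkpos
      exact_mod_cast this
    nlinarith
  have hζvmem : ζ * v ∈ ball (0 : ℂ) ε := by
    simp only [mem_ball, dist_zero_right, norm_mul] at hvmem ⊢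
    calc ‖ζ‖ * ‖v‖ = ‖v‖ := by rw [show ‖ζ‖ = 1 from hζabs, one_mul]
    _ < ε := hvmem
  obtain ⟨z₁, hz₁t, hz₁⟩ := hball hvmem
  obtain ⟨z₂, hz₂t, hz₂⟩ := hball hζvmem
  have hfz : f z₁ = f z₂ := by
    have h1 : F z₁ = v ^ n := by
      rw [(htp z₁ hz₁t).1, smul_eq_mul, ← hrn z₁ hz₁t, ← mul_pow,
        show (z₁ - a) * r z₁ = ψ z₁ from rfl, hz₁]
    have h2 : F z₂ = v ^ n := by
      rw [(htp z₂ hz₂t).1, smul_eq_mul, ← hrn z₂ hz₂t, ← mul_pow,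
        show (z₂ - a) * r z₂ = ψ z₂ from rfl, hz₂, mul_pow, hζn, one_mul]
    have := h1.trans h2.symm
    simpa [hFdef, sub_left_inj] using this
  have hz12 : z₁ = z₂ := hinj (htp z₁ hz₁t).2.2.2.2 (htp z₂ hz₂t).2.2.2.2 hfz
  rw [hz12, hz₂] at hz₁
  exact hζ1 ((mul_right_cancel₀ hvne (by rw [one_mul]; exact hz₁)))

open Complex Metric Set Filter
open scoped Topology

lemma mobius_normSq (a u : ℂ) :
    Complex.normSq (1 - (starRingEnd ℂ) a * u) - Complex.normSq (a - u)
      = (1 - Complex.normSq a) * (1 - Complex.normSq u) := by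
  simp only [Complex.normSq_apply, Complex.sub_re, Complex.sub_im, Complex.mul_re,
    Complex.mul_im, Complex.one_re, Complex.one_im, Complex.conj_re, Complex.conj_im]
  ring

lemma schwarz_pick_zero {q : ℂ → ℂ} (hq : DifferentiableOn ℂ q (ball 0 1))
    (hb : ∀ z ∈ ball (0:ℂ) 1, ‖q z‖ ≤ 1) :
    ‖deriv q 0‖ ≤ 1 - ‖q 0‖ ^ 2 := by
  have h01 : (0:ℂ) ∈ ball (0:ℂ) 1 := mem_ball_self one_pos
  by_cases hlt : ∀ z ∈ ball (0:ℂ) 1, ‖q z‖ < 1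
  · -- strict case: Möbius trick
    set a : ℂ := q 0 with ha
    have haa : ‖a‖ < 1 := hlt 0 h01
    have hna : Complex.normSq a < 1 := by
      rw [← Complex.sq_norm] at *
      nlinarith [norm_nonneg a]
    have hden : ∀ u : ℂ, ‖u‖ < 1 → (1 : ℂ) - (starRingEnd ℂ) a * u ≠ 0 := by
      intro u hu h
      have h1 : (starRingEnd ℂ) a * u = 1 := by linear_combination -h
      have := congrArg (‖·‖) h1
      rw [norm_mul, Complex.norm_conj, norm_one] at this
      nlinarith [norm_nonneg u, norm_nonneg a]
    set F : ℂ → ℂ := fun z => (a - q z) / (1 - (starRingEnd ℂ) a * q z) with hF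
    have hF0 : F 0 = 0 := by simp [hF, ha]
    have hFmaps : MapsTo F (ball (0:ℂ) 1) (ball (0:ℂ) 1) := by
      intro z hz
      have hqz := hlt z hz
      have hd := hden (q z) hqz
      have hkey := mobius_normSq a (q z)
      have hnu : Complex.normSq (q z) < 1 := by
        have := Complex.sq_norm (q z)
        nlinarith [norm_nonneg (q z)]
      have hlt2 : Complex.normSq (a - q z) < Complex.normSq (1 - (starRingEnd ℂ) a * q z) := by
        nlinarith
      rw [mem_ball_zero_iff, hF, norm_div, div_lt_one (norm_pos_iff.mpr hd)]
      have h1 : ‖a - q z‖ ^ 2 < ‖1 - (starRingEnd ℂ) a * q z‖ ^ 2 := by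
        rw [Complex.sq_norm, Complex.sq_norm]
        exact hlt2
      nlinarith [norm_nonneg (a - q z), norm_nonneg (1 - (starRingEnd ℂ) a * q z)]
    have hFdiff : DifferentiableOn ℂ F (ball (0:ℂ) 1) := by
      intro z hz
      have hqz : DifferentiableWithinAt ℂ q (ball (0:ℂ) 1) z := hq z hz
      exact ((differentiableWithinAt_const a).sub hqz).div
        ((differentiableWithinAt_const 1).sub ((differentiableWithinAt_const _).mul hqz))
        (hden (q z) (hlt z hz))
    have hSch : ‖deriv F 0‖ ≤ 1 := by
      refine Complex.norm_deriv_le_one_of_mapsTo_ball hFdiff ?_ one_pos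
      rw [hF0]; exact hFmaps.mono_right ball_subset_closedBall
    -- compute deriv F 0
    have hqd : DifferentiableAt ℂ q 0 := hq.differentiableAt (isOpen_ball.mem_nhds h01)
    set d : ℂ := deriv q 0 with hdd
    have hnum : HasDerivAt (fun z => a - q z) (-d) 0 := hqd.hasDerivAt.const_sub a
    have hden' : HasDerivAt (fun z => (1:ℂ) - (starRingEnd ℂ) a * q z)
        (-((starRingEnd ℂ) a * d)) 0 := by
      simpa using (hqd.hasDerivAt.const_mul ((starRingEnd ℂ) a)).const_sub 1
    have hDne : (1:ℂ) - (starRingEnd ℂ) a * a ≠ 0 := hden a haa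
    have hq0a : q 0 = a := rfl
    have hDne' : (1:ℂ) - (starRingEnd ℂ) a * q 0 ≠ 0 := by rwa [hq0a]
    have hdiv := hnum.div hden' hDne'
    have hval : deriv F 0 = -d / (1 - (starRingEnd ℂ) a * a) := by
      have h : deriv F 0 = (-d * (1 - (starRingEnd ℂ) a * q 0) -
          (a - q 0) * -((starRingEnd ℂ) a * d)) / (1 - (starRingEnd ℂ) a * q 0) ^ 2 :=
        hdiv.deriv
      rw [h, hq0a]
      field_simp
      ring
    have hDr : (1:ℂ) - (starRingEnd ℂ) a * a = ((1 - Complex.normSq a : ℝ) : ℂ) := by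
      rw [Complex.ofReal_sub, Complex.ofReal_one, mul_comm ((starRingEnd ℂ) a) a,
        Complex.mul_conj]
    have habs : ‖deriv F 0‖ = ‖d‖ / (1 - Complex.normSq a) := by
      rw [hval, norm_div, hDr, Complex.norm_real, Real.norm_eq_abs, abs_of_pos (by linarith), norm_neg]
    rw [habs, div_le_one (by linarith)] at hSch
    rw [← hdd, ← ha, ← Complex.sq_norm] at *
    linarith
  · -- max modulus case
    push_neg at hlt
    obtain ⟨z₀, hz₀, hge⟩ := hlt
    have heq : ‖q z₀‖ = 1 := le_antisymm (hb z₀ hz₀) hge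
    have hmax : IsMaxOn (norm ∘ q) (ball (0:ℂ) 1) z₀ := by
      intro z hz
      simp only [Function.comp_apply, mem_setOf_eq]
      rw [heq]; exact hb z hz
    have hconst : EqOn q (Function.const ℂ (q z₀)) (ball (0:ℂ) 1) :=
      Complex.eqOn_of_isPreconnected_of_isMaxOn_norm (convex_ball _ _).isPreconnected
        isOpen_ball hq hz₀ hmax
    have hq0 : ‖q 0‖ = 1 := by rw [hconst h01]; exact heq
    have hd0 : deriv q 0 = 0 := by
      have hev : q =ᶠ[𝓝 0] Function.const ℂ (q z₀) :=
        Filter.eventuallyEq_of_mem (isOpen_ball.mem_nhds h01) hconst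
      rw [hev.deriv_eq]
      exact deriv_const _ _
    rw [hd0, hq0]
    simp

theorem third_coefficient_bound (Φ g : ℂ → ℂ)
    (hΦ : DifferentiableOn ℂ Φ (ball (0:ℂ) 1))
    (hΦinj : Set.InjOn Φ (ball (0:ℂ) 1))
    (hΦ0 : Φ 0 = 1)
    (hΦ1re : 0 < (deriv Φ 0).re) (hΦ1im : (deriv Φ 0).im = 0)
    (hΦ2im : (iteratedDeriv 2 Φ 0).im = 0)
    (hΦre : ∀ z ∈ ball (0:ℂ) 1, 0 < (Φ z).re)
    (hcond : 2 * (deriv Φ 0).re ≤ |(iteratedDeriv 2 Φ 0).re + 2 * (deriv Φ 0).re ^ 2|)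
    (hg : DifferentiableOn ℂ g (ball (0:ℂ) 1))
    (h0 : g 0 = 0) (h1 : deriv g 0 = 1)
    (hsub : ∀ z ∈ ball (0:ℂ) 1, z ≠ 0 → z * deriv g z / g z ∈ Φ '' (ball (0:ℂ) 1)) :
    ‖iteratedDeriv 3 g 0 / 6‖
      ≤ (deriv Φ 0).re / 2 *
        |(iteratedDeriv 2 Φ 0).re / (2 * (deriv Φ 0).re) + (deriv Φ 0).re| := by
  have h01 : (0:ℂ) ∈ ball (0:ℂ) 1 := mem_ball_self one_pos
  have hgA : AnalyticOnNhd ℂ g (ball (0:ℂ) 1) := hg.analyticOnNhd isOpen_ball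
  have hΦA : AnalyticOnNhd ℂ Φ (ball (0:ℂ) 1) := hΦ.analyticOnNhd isOpen_ball
  have hg1A : AnalyticOnNhd ℂ (deriv g) (ball (0:ℂ) 1) := hgA.deriv
  have hg2A : AnalyticOnNhd ℂ (deriv (deriv g)) (ball (0:ℂ) 1) := hg1A.deriv
  have hg3A : AnalyticOnNhd ℂ (deriv (deriv (deriv g))) (ball (0:ℂ) 1) := hg2A.deriv
  have hΦ1A : AnalyticOnNhd ℂ (deriv Φ) (ball (0:ℂ) 1) := hΦA.deriv
  -- g does not vanish away from 0
  have hgne : ∀ z ∈ ball (0:ℂ) 1, z ≠ 0 → g z ≠ 0 := by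
    intro z hz hz0 hgz
    obtain ⟨u, hu, hΦu⟩ := hsub z hz hz0
    have := hΦre u hu
    rw [hΦu, hgz, div_zero] at this
    simp at this
  -- h = dslope g 0
  set h : ℂ → ℂ := dslope g 0 with hhdef
  have hhd : DifferentiableOn ℂ h (ball (0:ℂ) 1) :=
    (differentiableOn_dslope (isOpen_ball.mem_nhds h01)).mpr hg
  have hhA : AnalyticOnNhd ℂ h (ball (0:ℂ) 1) := hhd.analyticOnNhd isOpen_ball
  have hh0 : h 0 = 1 := by rw [hhdef, dslope_same, h1]
  have hgzh : ∀ z : ℂ, g z = z * h z := by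
    intro z
    have := sub_smul_dslope g 0 z
    rw [h0, sub_zero, sub_zero, smul_eq_mul] at this
    rw [← this, hhdef]
  have hhne : ∀ z ∈ ball (0:ℂ) 1, h z ≠ 0 := by
    intro z hz
    rcases eq_or_ne z 0 with rfl | hz0
    · rw [hh0]; exact one_ne_zero
    · intro hc
      apply hgne z hz hz0
      rw [hgzh z, hc, mul_zero]
  -- p
  set p : ℂ → ℂ := fun z => deriv g z / h z with hpdef
  have hpA : AnalyticOnNhd ℂ p (ball (0:ℂ) 1) :=
    fun z hz => ((hg1A z hz).div (hhA z hz) (hhne z hz))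
  have hp0 : p 0 = 1 := by rw [hpdef]; simp [hh0, h1]
  have hpd : DifferentiableOn ℂ p (ball (0:ℂ) 1) := fun z hz =>
    (hpA z hz).differentiableAt.differentiableWithinAt
  have hp1A : AnalyticOnNhd ℂ (deriv p) (ball (0:ℂ) 1) := hpA.deriv
  have hp2A : AnalyticOnNhd ℂ (deriv (deriv p)) (ball (0:ℂ) 1) := hp1A.deriv
  -- p lands in Φ '' ball
  have hpmem : ∀ z ∈ ball (0:ℂ) 1, p z ∈ Φ '' (ball (0:ℂ) 1) := by
    intro z hz
    rcases eq_or_ne z 0 with rfl | hz0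
    · rw [hp0]; exact ⟨0, h01, hΦ0⟩
    · have hform : p z = z * deriv g z / g z := by
        rw [hpdef]
        have hzne : z ≠ 0 := hz0
        have := hgzh z
        rw [this]
        field_simp [hhne z hz]
      rw [hform]; exact hsub z hz hz0
  -- key identity
  have hE : ∀ z ∈ ball (0:ℂ) 1, z * deriv g z = p z * g z := by
    intro z hz
    rw [hpdef, hgzh z]
    field_simp [hhne z hz]
  -- Φ' nonvanishing
  have hΦ' : ∀ z ∈ ball (0:ℂ) 1, deriv Φ z ≠ 0 := fun z hz =>
    deriv_ne_zero_of_injOn_s17 isOpen_ball hΦ hΦinj hz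
  -- construct w
  have hwex : ∀ z ∈ ball (0:ℂ) 1, ∃ u ∈ ball (0:ℂ) 1, Φ u = p z := by
    intro z hz
    obtain ⟨u, hu, hup⟩ := hpmem z hz
    exact ⟨u, hu, hup⟩
  choose! w hwB hwΦ using hwex
  have hw0 : w 0 = 0 := by
    apply hΦinj (hwB 0 h01) h01
    rw [hwΦ 0 h01, hp0, hΦ0]
  -- differentiability of w
  have hwd : ∀ z₀ ∈ ball (0:ℂ) 1, DifferentiableAt ℂ w z₀ := by
    intro z₀ hz₀
    have hu₀ : w z₀ ∈ ball (0:ℂ) 1 := hwB z₀ hz₀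
    have hstrict : HasStrictDerivAt Φ (deriv Φ (w z₀)) (w z₀) :=
      ((hΦA _ hu₀).contDiffAt (n := 1)).hasStrictDerivAt one_ne_zero
    have hne := hΦ' _ hu₀
    set Ψ := hstrict.localInverse Φ _ _ hne with hΨdef
    have hΨd : HasStrictDerivAt Ψ (deriv Φ (w z₀))⁻¹ (Φ (w z₀)) := hstrict.to_localInverse hne
    have hright : ∀ᶠ y in 𝓝 (Φ (w z₀)), Φ (Ψ y) = y :=
      (hstrict.hasStrictFDerivAt_equiv hne).eventually_right_inverse
    have hpdiff : DifferentiableAt ℂ p z₀ := (hpA z₀ hz₀).differentiableAt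
    have hptend : Filter.Tendsto p (𝓝 z₀) (𝓝 (Φ (w z₀))) := by
      rw [hwΦ z₀ hz₀]
      exact hpdiff.continuousAt
    have hΨp : Filter.Tendsto (fun z => Ψ (p z)) (𝓝 z₀) (𝓝 (w z₀)) := by
      have h1 : Ψ (Φ (w z₀)) = w z₀ :=
        (hstrict.hasStrictFDerivAt_equiv hne).localInverse_apply_image
      have := (hΨd.hasDerivAt.differentiableAt.continuousAt).tendsto.comp hptend
      rwa [h1] at this
    have hev : w =ᶠ[𝓝 z₀] fun z => Ψ (p z) := by
      have e1 : ∀ᶠ z in 𝓝 z₀, Φ (Ψ (p z)) = p z := hptend.eventually hright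
      have e2 : ∀ᶠ z in 𝓝 z₀, Ψ (p z) ∈ ball (0:ℂ) 1 :=
        hΨp.eventually (isOpen_ball.eventually_mem hu₀)
      have e3 : ∀ᶠ z in 𝓝 z₀, z ∈ ball (0:ℂ) 1 := isOpen_ball.eventually_mem hz₀
      filter_upwards [e1, e2, e3] with z h1 h2 h3
      exact hΦinj (hwB z h3) h2 (by rw [hwΦ z h3, h1])
    have hΨpd : DifferentiableAt ℂ (fun z => Ψ (p z)) z₀ := by
      have h1 : DifferentiableAt ℂ Ψ (p z₀) := by
        rw [← hwΦ z₀ hz₀]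
        exact hΨd.hasDerivAt.differentiableAt
      exact h1.comp z₀ hpdiff
    exact hΨpd.congr_of_eventuallyEq hev
  have hwdOn : DifferentiableOn ℂ w (ball (0:ℂ) 1) := fun z hz =>
    (hwd z hz).differentiableWithinAt
  have hwA : AnalyticOnNhd ℂ w (ball (0:ℂ) 1) := hwdOn.analyticOnNhd isOpen_ball
  have hw1A : AnalyticOnNhd ℂ (deriv w) (ball (0:ℂ) 1) := hwA.deriv
  -- first differentiated identity
  have E1 : ∀ z ∈ ball (0:ℂ) 1,
      1 * deriv g z + z * deriv (deriv g) z - (deriv p z * g z + p z * deriv g z) = 0 := by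
    intro z hz
    have hE0 : (fun y => y * deriv g y - p y * g y) =ᶠ[𝓝 z] fun _ => (0:ℂ) := by
      filter_upwards [isOpen_ball.eventually_mem hz] with y hy
      rw [hE y hy, sub_self]
    have hD : HasDerivAt (fun y => y * deriv g y - p y * g y)
        (1 * deriv g z + z * deriv (deriv g) z - (deriv p z * g z + p z * deriv g z)) z :=
      ((hasDerivAt_id z).mul (hg1A z hz).differentiableAt.hasDerivAt).sub
        ((hpA z hz).differentiableAt.hasDerivAt.mul (hgA z hz).differentiableAt.hasDerivAt)
    have hv := hD.deriv
    rw [hE0.deriv_eq, deriv_const] at hv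
    linear_combination -hv
  -- second differentiated identity
  have E2 : ∀ z ∈ ball (0:ℂ) 1,
      deriv (deriv g) z + (1 * deriv (deriv g) z + z * deriv (deriv (deriv g)) z) -
        ((deriv (deriv p) z * g z + deriv p z * deriv g z) +
          (deriv p z * deriv g z + p z * deriv (deriv g) z)) = 0 := by
    intro z hz
    have hE0 : (fun y => 1 * deriv g y + y * deriv (deriv g) y -
        (deriv p y * g y + p y * deriv g y)) =ᶠ[𝓝 z] fun _ => (0:ℂ) := by
      filter_upwards [isOpen_ball.eventually_mem hz] with y hy
      rw [E1 y hy]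
    have hD : HasDerivAt (fun y => 1 * deriv g y + y * deriv (deriv g) y -
        (deriv p y * g y + p y * deriv g y))
        ((0 * deriv g z + 1 * deriv (deriv g) z) +
          (1 * deriv (deriv g) z + z * deriv (deriv (deriv g)) z) -
          ((deriv (deriv p) z * g z + deriv p z * deriv g z) +
            (deriv p z * deriv g z + p z * deriv (deriv g) z))) z := by
      refine HasDerivAt.sub (HasDerivAt.add ?_ ?_) (HasDerivAt.add ?_ ?_)
      · exact (hasDerivAt_const z (1:ℂ)).mul (hg1A z hz).differentiableAt.hasDerivAt
      · exact (hasDerivAt_id z).mul (hg2A z hz).differentiableAt.hasDerivAt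
      · exact (hp1A z hz).differentiableAt.hasDerivAt.mul (hgA z hz).differentiableAt.hasDerivAt
      · exact (hpA z hz).differentiableAt.hasDerivAt.mul (hg1A z hz).differentiableAt.hasDerivAt
    have hv := hD.deriv
    rw [hE0.deriv_eq, deriv_const] at hv
    linear_combination -hv
  -- third differentiated identity, at 0 only
  have E3 : deriv (deriv (deriv g)) 0 + (deriv (deriv (deriv g)) 0 +
        (1 * deriv (deriv (deriv g)) 0 + 0 * deriv (deriv (deriv (deriv g))) 0)) -
        (((deriv (deriv (deriv p)) 0 * g 0 + deriv (deriv p) 0 * deriv g 0) +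
            (deriv (deriv p) 0 * deriv g 0 + deriv p 0 * deriv (deriv g) 0)) +
          ((deriv (deriv p) 0 * deriv g 0 + deriv p 0 * deriv (deriv g) 0) +
            (deriv p 0 * deriv (deriv g) 0 + p 0 * deriv (deriv (deriv g)) 0))) = 0 := by
    have hE0 : (fun y => deriv (deriv g) y + (1 * deriv (deriv g) y +
        y * deriv (deriv (deriv g)) y) -
        ((deriv (deriv p) y * g y + deriv p y * deriv g y) +
          (deriv p y * deriv g y + p y * deriv (deriv g) y))) =ᶠ[𝓝 0] fun _ => (0:ℂ) := by
      filter_upwards [isOpen_ball.eventually_mem h01] with y hy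
      rw [E2 y hy]
    have hD : HasDerivAt (fun y => deriv (deriv g) y + (1 * deriv (deriv g) y +
        y * deriv (deriv (deriv g)) y) -
        ((deriv (deriv p) y * g y + deriv p y * deriv g y) +
          (deriv p y * deriv g y + p y * deriv (deriv g) y)))
        (deriv (deriv (deriv g)) 0 + ((0 * deriv (deriv g) 0 + 1 * deriv (deriv (deriv g)) 0) +
          (1 * deriv (deriv (deriv g)) 0 + 0 * deriv (deriv (deriv (deriv g))) 0)) -
          (((deriv (deriv (deriv p)) 0 * g 0 + deriv (deriv p) 0 * deriv g 0) +
              (deriv (deriv p) 0 * deriv g 0 + deriv p 0 * deriv (deriv g) 0)) +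
            ((deriv (deriv p) 0 * deriv g 0 + deriv p 0 * deriv (deriv g) 0) +
              (deriv p 0 * deriv (deriv g) 0 + p 0 * deriv (deriv (deriv g)) 0)))) 0 := by
      refine HasDerivAt.sub (HasDerivAt.add ?_ (HasDerivAt.add ?_ ?_))
        (HasDerivAt.add (HasDerivAt.add ?_ ?_) (HasDerivAt.add ?_ ?_))
      · exact (hg2A 0 h01).differentiableAt.hasDerivAt
      · exact (hasDerivAt_const 0 (1:ℂ)).mul (hg2A 0 h01).differentiableAt.hasDerivAt
      · exact (hasDerivAt_id 0).mul (hg3A 0 h01).differentiableAt.hasDerivAt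
      · exact (hp2A 0 h01).differentiableAt.hasDerivAt.mul (hgA 0 h01).differentiableAt.hasDerivAt
      · exact (hp1A 0 h01).differentiableAt.hasDerivAt.mul (hg1A 0 h01).differentiableAt.hasDerivAt
      · exact (hp1A 0 h01).differentiableAt.hasDerivAt.mul (hg1A 0 h01).differentiableAt.hasDerivAt
      · exact (hpA 0 h01).differentiableAt.hasDerivAt.mul (hg2A 0 h01).differentiableAt.hasDerivAt
    have hv := hD.deriv
    rw [hE0.deriv_eq, deriv_const] at hv
    linear_combination -hv
  -- coefficient relations
  have hg20 : deriv (deriv g) 0 = 2 * deriv p 0 := by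
    have h2 := E2 0 h01
    rw [h0, h1, hp0] at h2
    linear_combination h2
  have hg30 : 2 * deriv (deriv (deriv g)) 0 = 3 * deriv (deriv p) 0 + 6 * deriv p 0 ^ 2 := by
    have h3 := E3
    rw [h0, h1, hp0, hg20] at h3
    linear_combination h3
  -- chain rule relations for p = Φ ∘ w
  have hp1w : ∀ z ∈ ball (0:ℂ) 1, deriv p z = deriv Φ (w z) * deriv w z := by
    intro z hz
    have hev : p =ᶠ[𝓝 z] (Φ ∘ w) := by
      filter_upwards [isOpen_ball.eventually_mem hz] with y hy
      exact (hwΦ y hy).symm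
    rw [hev.deriv_eq, deriv_comp z (hΦA (w z) (hwB z hz)).differentiableAt (hwd z hz)]
  have hp10 : deriv p 0 = deriv Φ 0 * deriv w 0 := by rw [hp1w 0 h01, hw0]
  have hp20 : deriv (deriv p) 0 =
      deriv (deriv Φ) 0 * (deriv w 0) ^ 2 + deriv Φ 0 * deriv (deriv w) 0 := by
    have hev : deriv p =ᶠ[𝓝 0] (fun z => deriv Φ (w z) * deriv w z) := by
      filter_upwards [isOpen_ball.eventually_mem h01] with y hy
      exact hp1w y hy
    rw [hev.deriv_eq]
    have hcomp : HasDerivAt (fun z => deriv Φ (w z))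
        (deriv (deriv Φ) (w 0) * deriv w 0) 0 :=
      HasDerivAt.comp 0 ((hΦ1A (w 0) (hwB 0 h01)).differentiableAt.hasDerivAt)
        (hwd 0 h01).hasDerivAt
    have hD : HasDerivAt (fun z => deriv Φ (w z) * deriv w z)
        ((deriv (deriv Φ) (w 0) * deriv w 0) * deriv w 0 +
          deriv Φ (w 0) * deriv (deriv w) 0) 0 :=
      hcomp.mul ((hw1A 0 h01).differentiableAt.hasDerivAt)
    rw [hD.deriv, hw0]
    ring
  -- Schwarz estimates
  have hq : DifferentiableOn ℂ (dslope w 0) (ball (0:ℂ) 1) :=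
    (differentiableOn_dslope (isOpen_ball.mem_nhds h01)).mpr hwdOn
  have hqA : AnalyticOnNhd ℂ (dslope w 0) (ball (0:ℂ) 1) := hq.analyticOnNhd isOpen_ball
  have hq1A : AnalyticOnNhd ℂ (deriv (dslope w 0)) (ball (0:ℂ) 1) := hqA.deriv
  have hmaps : MapsTo w (ball (0:ℂ) 1) (ball (w 0) 1) := by
    rw [hw0]; intro z hz; exact hwB z hz
  have hqb : ∀ z ∈ ball (0:ℂ) 1, ‖dslope w 0 z‖ ≤ 1 := by
    intro z hz
    have := Complex.norm_dslope_le_div_of_mapsTo_ball hwdOn (hmaps.mono_right ball_subset_closedBall) hz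
    simpa using this
  have hq0 : dslope w 0 0 = deriv w 0 := dslope_same w 0
  have hc1le : ‖deriv w 0‖ ≤ 1 := by rw [← hq0]; exact hqb 0 h01
  have hc2le : ‖deriv (dslope w 0) 0‖ ≤ 1 - ‖deriv w 0‖ ^ 2 := by
    have := schwarz_pick_zero hq hqb
    rwa [hq0] at this
  have hwq : ∀ y, w y = y * dslope w 0 y := by
    intro y
    have := sub_smul_dslope w 0 y
    rw [hw0, sub_zero, sub_zero, smul_eq_mul] at this
    exact this.symm
  have hw1eq : ∀ z ∈ ball (0:ℂ) 1,
      deriv w z = dslope w 0 z + z * deriv (dslope w 0) z := by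
    intro z hz
    have hfun : w = fun y => y * dslope w 0 y := funext hwq
    have hD : HasDerivAt (fun y => y * dslope w 0 y)
        (1 * dslope w 0 z + z * deriv (dslope w 0) z) z :=
      (hasDerivAt_id z).mul ((hqA z hz).differentiableAt.hasDerivAt)
    have hdw : deriv w z = 1 * dslope w 0 z + z * deriv (dslope w 0) z := by
      conv_lhs => rw [hfun]
      exact hD.deriv
    rw [hdw]; ring
  have hw20 : deriv (deriv w) 0 = 2 * deriv (dslope w 0) 0 := by
    have hev : deriv w =ᶠ[𝓝 0] (fun z => dslope w 0 z + z * deriv (dslope w 0) z) := by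
      filter_upwards [isOpen_ball.eventually_mem h01] with y hy
      exact hw1eq y hy
    rw [hev.deriv_eq]
    have hD : HasDerivAt (fun z => dslope w 0 z + z * deriv (dslope w 0) z)
        (deriv (dslope w 0) 0 +
          (1 * deriv (dslope w 0) 0 + 0 * deriv (deriv (dslope w 0)) 0)) 0 :=
      ((hqA 0 h01).differentiableAt.hasDerivAt).add
        ((hasDerivAt_id 0).mul ((hq1A 0 h01).differentiableAt.hasDerivAt))
    rw [hD.deriv]; ring
  -- final numeric assembly
  set c₁ : ℂ := deriv w 0 with hc₁
  set c₂ : ℂ := deriv (dslope w 0) 0 with hc₂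
  set B : ℝ := (deriv Φ 0).re with hB
  set Xr : ℝ := (iteratedDeriv 2 Φ 0).re with hXr
  have hB1 : deriv Φ 0 = (B : ℂ) := by
    apply Complex.ext
    · simp [hB]
    · simp [hΦ1im]
  have hX1 : iteratedDeriv 2 Φ 0 = (Xr : ℂ) := by
    apply Complex.ext
    · simp [hXr]
    · simp [hΦ2im]
  have hit3 : iteratedDeriv 3 g 0 = deriv (deriv (deriv g)) 0 := by
    simp [iteratedDeriv_succ, iteratedDeriv_zero]
  have hit2 : deriv (deriv Φ) 0 = iteratedDeriv 2 Φ 0 := by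
    simp [iteratedDeriv_succ, iteratedDeriv_zero]
  have hrep : iteratedDeriv 3 g 0 / 6 =
      (((Xr + 2 * B ^ 2 : ℝ) : ℂ) * c₁ ^ 2 + 2 * (B : ℂ) * c₂) / 4 := by
    rw [hit3]
    have h3 := hg30
    rw [hp20, hp10, hw20, hit2, hX1, hB1] at h3
    push_cast
    linear_combination h3 / 12
  rw [hrep]
  have htri : ‖(((Xr + 2 * B ^ 2 : ℝ) : ℂ) * c₁ ^ 2 + 2 * (B : ℂ) * c₂) / 4‖
      ≤ (|Xr + 2 * B ^ 2| * ‖c₁‖ ^ 2 + 2 * B * ‖c₂‖) / 4 := by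
    rw [norm_div]
    have h4 : ‖(4 : ℂ)‖ = 4 := by norm_num
    rw [h4]
    apply div_le_div_of_nonneg_right ?_ (by norm_num)
    calc ‖((Xr + 2 * B ^ 2 : ℝ) : ℂ) * c₁ ^ 2 + 2 * (B : ℂ) * c₂‖
        ≤ ‖((Xr + 2 * B ^ 2 : ℝ) : ℂ) * c₁ ^ 2‖ +
          ‖2 * (B : ℂ) * c₂‖ := norm_add_le _ _
      _ = |Xr + 2 * B ^ 2| * ‖c₁‖ ^ 2 + 2 * B * ‖c₂‖ := by
          rw [norm_mul, norm_mul, norm_mul, norm_pow, Complex.norm_real, Real.norm_eq_abs,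
            Complex.norm_real, Real.norm_eq_abs, Complex.norm_two, abs_of_pos hΦ1re]
  refine htri.trans ?_
  have hBpos : (0:ℝ) < B := hΦ1re
  have ht0 : 0 ≤ ‖c₁‖ ^ 2 := by positivity
  have ht1 : ‖c₁‖ ^ 2 ≤ 1 := by nlinarith [norm_nonneg c₁]
  have hu0 : 0 ≤ ‖c₂‖ := norm_nonneg c₂
  have habs2 : |Xr / (2 * B) + B| = |Xr + 2 * B ^ 2| / (2 * B) := by
    rw [show Xr / (2 * B) + B = (Xr + 2 * B ^ 2) / (2 * B) by field_simp,
      abs_div, abs_of_pos (show (0:ℝ) < 2 * B by linarith)]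
  rw [habs2]
  have hhalf : B / 2 * (|Xr + 2 * B ^ 2| / (2 * B)) = |Xr + 2 * B ^ 2| / 4 := by
    field_simp
    ring
  rw [hhalf]
  have hM := hcond
  rw [div_le_div_iff₀ (by norm_num) (by norm_num)]
  nlinarith [mul_nonneg (sub_nonneg.mpr hM) (sub_nonneg.mpr ht1),
    mul_le_mul_of_nonneg_left hc2le hBpos.le]
end
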